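/- arXiv:2212.01314 — 5 statements merged into one kernel-verified Lean document; each statement's English description precedes it below -/
import Mathlib

section
/- Let X = [0,1]^{n} ⊆ ℝ^{n}, let φ : ℝ^{n} → ℝ be convex on X, and let s : X → ℝ^{n} be a subgradient selection for φ on X (so s(x) is a subgradient of φ at x for every x ∈ X) satisfying ‖s(x)‖_∞ ≤ L for all x ∈ X, where L > 0. Let t > 0, set R_t = 1 + 2tL, and let ε ∈ (0, 9 n R_t²]. Then there exists a finite set S ⊆ X with |S| ≤ (9 n R_t² / ε)^{n/2} such that for every x ∈ X there exists x̂ ∈ S with ‖x − x̂‖² + t² ‖s(x) − s(x̂)‖² ≤ ε; in particular ‖x − x̂‖ ≤ √ε and ‖s(x) − s(x̂)‖ ≤ √ε / t. -/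
open scoped RealInnerProductSpace

/-!
The subgradient selection is monotone, `⟪s x - s y, x - y⟫ ≥ 0`, so for the map
`F x = x + t • s x` one has `‖x - y‖² + t² ‖s x - s y‖² ≤ ‖F x - F y‖²`. Up to a translation
`F` sends the unit cube into the cube `[0, R_t]ⁿ`; cutting that cube into `⌈R_t / h⌉ⁿ` cells of
side `h = √(ε / n)` and keeping one point of `X` per nonempty cell gives the net, and
`⌈R_t / h⌉ ≤ 3 R_t / h = √(9 n R_t² / ε)` because `R_t / h ≥ 1 / 3`.
-/

open Set

section InnerProductSpace

variable {E : Type*} [NormedAddCommGroup E] [InnerProductSpace ℝ E]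

theorem inner_sub_nonneg_of_subgradient {X : Set E} {φ : E → ℝ} {s : E → E}
    (hs : ∀ x ∈ X, ∀ u ∈ X, φ x + ⟪s x, u - x⟫ ≤ φ u) {x y : E} (hx : x ∈ X) (hy : y ∈ X) :
    0 ≤ ⟪s x - s y, x - y⟫ := by
  have hxy := hs x hx y hy
  have hyx := hs y hy x hx
  rw [← neg_sub x y, inner_neg_right] at hxy
  rw [inner_sub_left]
  linarith

theorem sq_norm_add_sq_mul_sq_norm_le {x u : E} {t : ℝ} (ht : 0 ≤ t) (hxu : 0 ≤ ⟪u, x⟫) :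
    ‖x‖ ^ 2 + t ^ 2 * ‖u‖ ^ 2 ≤ ‖x + t • u‖ ^ 2 := by
  rw [norm_add_sq_real, real_inner_smul_right, norm_smul, mul_pow, Real.norm_eq_abs, sq_abs,
    real_inner_comm]
  nlinarith [mul_nonneg ht hxu]

end InnerProductSpace

theorem EuclideanSpace.sq_norm_le_card_mul_sq {ι : Type*} [Fintype ι] {z : EuclideanSpace ℝ ι}
    {h : ℝ} (hz : ∀ i, |z i| ≤ h) : ‖z‖ ^ 2 ≤ Fintype.card ι * h ^ 2 := by
  rw [EuclideanSpace.real_norm_sq_eq, ← nsmul_eq_mul, ← Finset.card_univ, ← Finset.sum_const]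
  exact Finset.sum_le_sum fun i _ => sq_le_sq' (abs_le.1 (hz i)).1 (abs_le.1 (hz i)).2

theorem Nat.ceil_le_three_mul {a : ℝ} (ha : 3⁻¹ ≤ a) : (⌈a⌉₊ : ℝ) ≤ 3 * a := by
  rcases le_or_gt 2⁻¹ a with ha2 | ha2
  · linarith [Nat.ceil_le_two_mul ha2]
  · have : ⌈a⌉₊ ≤ 1 := Nat.ceil_le.2 (by norm_num; linarith)
    have : (⌈a⌉₊ : ℝ) ≤ 1 := by exact_mod_cast this
    linarith

theorem exists_finset_subset_card_le_forall_exists_eq {α β : Type*} {X : Set α} {g : α → β}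
    {T : Finset β} (hg : MapsTo g X T) :
    ∃ S : Finset α, ↑S ⊆ X ∧ S.card ≤ T.card ∧ ∀ x ∈ X, ∃ y ∈ S, g y = g x := by
  obtain ⟨X', hX'X, hbij⟩ := exists_subset_bijOn X g
  have hfin : X'.Finite :=
    Finite.of_finite_image (T.finite_toSet.subset (hbij.image_eq ▸ hg.image_subset)) hbij.injOn
  refine ⟨hfin.toFinset, by simpa using hX'X, ?_, fun x hx => ?_⟩
  · exact Finset.card_le_card_of_injOn g (fun y hy => hg (hX'X (by simpa using hy)))
      (by simpa using hbij.injOn)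
  · obtain ⟨y, hy, hyx⟩ := hbij.surjOn (mem_image_of_mem g hx)
    exact ⟨y, by simpa using hy, hyx⟩

/-- The index `k < m` of a cell `[k h, (k + 1) h]` containing `v`; the last cell also absorbs
everything beyond it. -/
noncomputable def cellIndex (h : ℝ) (m : ℕ) (v : ℝ) : ℕ := min ⌊v / h⌋₊ (m - 1)

section cellIndex

variable {h R v : ℝ} {m : ℕ}

theorem cellIndex_lt (hm : 0 < m) : cellIndex h m v < m :=
  (min_le_right _ _).trans_lt (Nat.sub_lt hm one_pos)

theorem cellIndex_mul_le (hh : 0 < h) (hv : 0 ≤ v) : (cellIndex h m v : ℝ) * h ≤ v := by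
  calc (cellIndex h m v : ℝ) * h ≤ ⌊v / h⌋₊ * h := by
        gcongr; exact_mod_cast min_le_left _ _
    _ ≤ v / h * h := by gcongr; exact Nat.floor_le (by positivity)
    _ = v := div_mul_cancel₀ v hh.ne'

theorem le_cellIndex_add_one_mul (hh : 0 < h) (hvR : v ≤ R) (hRm : R ≤ m * h) :
    v ≤ (cellIndex h m v + 1) * h := by
  rcases le_total ⌊v / h⌋₊ (m - 1) with hle | hle
  · rw [cellIndex, min_eq_left hle, ← div_le_iff₀ hh]
    exact (Nat.lt_floor_add_one _).le
  · rw [cellIndex, min_eq_right hle]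
    have : (m : ℝ) ≤ (m - 1 : ℕ) + 1 := by exact_mod_cast (by omega : m ≤ m - 1 + 1)
    nlinarith

theorem abs_sub_le_of_cellIndex_eq {w : ℝ} (hh : 0 < h) (hv : v ∈ Icc 0 R) (hw : w ∈ Icc 0 R)
    (hRm : R ≤ m * h) (hvw : cellIndex h m v = cellIndex h m w) : |v - w| ≤ h := by
  have hv₁ := cellIndex_mul_le (m := m) hh hv.1
  have hv₂ := le_cellIndex_add_one_mul hh hv.2 hRm
  have hw₁ := cellIndex_mul_le (m := m) hh hw.1
  have hw₂ := le_cellIndex_add_one_mul hh hw.2 hRm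
  rw [hvw] at hv₁ hv₂
  rw [abs_le]
  constructor <;> linarith

end cellIndex

theorem exists_finset_cover_of_mem_Icc {α ι : Type*} [Fintype ι] (X : Set α) (F : α → ι → ℝ)
    {R h : ℝ} (hR : 0 < R) (hh : 0 < h) (hF : ∀ x ∈ X, ∀ i, F x i ∈ Icc 0 R) :
    ∃ S : Finset α, ↑S ⊆ X ∧ S.card ≤ ⌈R / h⌉₊ ^ Fintype.card ι ∧
      ∀ x ∈ X, ∃ y ∈ S, ∀ i, |F x i - F y i| ≤ h := by
  classical
  set m := ⌈R / h⌉₊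
  have hm : 0 < m := Nat.ceil_pos.2 (div_pos hR hh)
  have hRm : R ≤ m * h := (div_le_iff₀ hh).1 (Nat.le_ceil _)
  have hmaps : MapsTo (fun x i => cellIndex h m (F x i)) X
      (Fintype.piFinset fun _ : ι => Finset.range m) := fun x _ => by
    simpa using fun i => cellIndex_lt hm
  obtain ⟨S, hSX, hcard, hcover⟩ := exists_finset_subset_card_le_forall_exists_eq hmaps
  refine ⟨S, hSX, by simpa using hcard, fun x hx => ?_⟩
  obtain ⟨y, hyS, hyx⟩ := hcover x hx
  exact ⟨y, hyS, fun i => abs_sub_le_of_cellIndex_eq hh (hF x hx i) (hF y (hSX hyS) i) hRm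
    (congrFun hyx i).symm⟩

theorem le_sqrt_and_le_sqrt_div_of_sq_add_sq_mul_sq_le {a b t ε : ℝ}
    (ht : 0 < t) (h : a ^ 2 + t ^ 2 * b ^ 2 ≤ ε) : a ≤ √ε ∧ b ≤ √ε / t := by
  refine ⟨Real.le_sqrt_of_sq_le (by nlinarith), ?_⟩
  rw [le_div_iff₀ ht]
  exact Real.le_sqrt_of_sq_le (by nlinarith)

theorem subgradient_net_exists_general (n : ℕ)
    (φ : EuclideanSpace ℝ (Fin n) → ℝ)
    (s : EuclideanSpace ℝ (Fin n) → EuclideanSpace ℝ (Fin n))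
    (hs : ∀ x ∈ {x : EuclideanSpace ℝ (Fin n) | ∀ i, x i ∈ Set.Icc (0:ℝ) 1},
      ∀ u ∈ {x : EuclideanSpace ℝ (Fin n) | ∀ i, x i ∈ Set.Icc (0:ℝ) 1},
        φ x + ⟪s x, u - x⟫ ≤ φ u)
    (L : ℝ) (hL : 0 < L)
    (hsL : ∀ x ∈ {x : EuclideanSpace ℝ (Fin n) | ∀ i, x i ∈ Set.Icc (0:ℝ) 1},
      ∀ i, |s x i| ≤ L)
    (t : ℝ) (ht : 0 < t)
    (ε : ℝ) (hε : ε ∈ Set.Ioc (0:ℝ) (9 * n * (1 + 2 * t * L) ^ 2)) :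
    ∃ S : Finset (EuclideanSpace ℝ (Fin n)),
      (↑S ⊆ {x : EuclideanSpace ℝ (Fin n) | ∀ i, x i ∈ Set.Icc (0:ℝ) 1}) ∧
      (S.card : ℝ) ≤ (9 * n * (1 + 2 * t * L) ^ 2 / ε) ^ ((n : ℝ) / 2) ∧
      ∀ x ∈ {x : EuclideanSpace ℝ (Fin n) | ∀ i, x i ∈ Set.Icc (0:ℝ) 1},
        ∃ xh ∈ S, ‖x - xh‖ ^ 2 + t ^ 2 * ‖s x - s xh‖ ^ 2 ≤ ε ∧
          ‖x - xh‖ ≤ Real.sqrt ε ∧ ‖s x - s xh‖ ≤ Real.sqrt ε / t := by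
  set R := 1 + 2 * t * L
  set B := 9 * n * R ^ 2 / ε
  obtain ⟨hε₀, hεB⟩ := hε
  have hR : 0 < R := by positivity
  have hB : 1 ≤ B := (one_le_div hε₀).2 hεB
  have hsqrtB : 0 < √B := by positivity
  set h := 3 * R / √B
  have hh : 0 < h := by positivity
  have hF : ∀ x ∈ {x : EuclideanSpace ℝ (Fin n) | ∀ i, x i ∈ Icc (0:ℝ) 1}, ∀ i,
      x i + t * s x i + t * L ∈ Icc 0 R := fun x hx i => by
    obtain ⟨hx₀, hx₁⟩ := hx i
    obtain ⟨hs₀, hs₁⟩ := abs_le.1 (hsL x hx i)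
    constructor <;> nlinarith
  obtain ⟨S, hSX, hcard, hcover⟩ := exists_finset_cover_of_mem_Icc _ _ hR hh hF
  refine ⟨S, hSX, ?_, fun x hx => ?_⟩
  · have hRh : R / h = √B / 3 := by simp only [h]; field_simp
    calc (S.card : ℝ) ≤ (⌈R / h⌉₊ : ℝ) ^ n := by exact_mod_cast Fintype.card_fin n ▸ hcard
      _ ≤ √B ^ n := by
        gcongr
        rw [hRh]
        linarith [Nat.ceil_le_three_mul (a := √B / 3) (by linarith [Real.one_le_sqrt.2 hB])]
      _ = B ^ ((n : ℝ) / 2) := by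
        rw [Real.rpow_div_two_eq_sqrt _ (by positivity), Real.rpow_natCast]
  obtain ⟨y, hyS, hxy⟩ := hcover x hx
  have hnh : n * h ^ 2 = ε := by
    rw [div_pow, Real.sq_sqrt (by positivity)]
    have hn : (n : ℝ) ≠ 0 := fun hn => by simp [B, hn] at hB; linarith
    simp only [B]
    field_simp
    norm_num
  have key : ‖x - y‖ ^ 2 + t ^ 2 * ‖s x - s y‖ ^ 2 ≤ ε :=
    calc ‖x - y‖ ^ 2 + t ^ 2 * ‖s x - s y‖ ^ 2 ≤ ‖x - y + t • (s x - s y)‖ ^ 2 :=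
          sq_norm_add_sq_mul_sq_norm_le ht.le (inner_sub_nonneg_of_subgradient hs hx (hSX hyS))
      _ ≤ n * h ^ 2 := by
          simpa using EuclideanSpace.sq_norm_le_card_mul_sq (z := x - y + t • (s x - s y))
            fun i => by convert hxy i using 2; simp; ring
      _ = ε := hnh
  exact ⟨y, hyS, key,
    le_sqrt_and_le_sqrt_div_of_sq_add_sq_mul_sq_le ht key⟩

/-- covering of the graph of a bounded subgradient selection of a convex function
over the unit cube: there is a set `S` of cardinality at most `(9 n R_t² / ε)^{n/2}` such that
every point of the cube is `√ε`-close to a point of `S` both in position and (after scaling by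
`t`) in subgradient value. -/
theorem subgradient_net_exists (n : ℕ)
    (φ : EuclideanSpace ℝ (Fin n) → ℝ)
    (hφ : ConvexOn ℝ {x : EuclideanSpace ℝ (Fin n) | ∀ i, x i ∈ Set.Icc (0:ℝ) 1} φ)
    (s : EuclideanSpace ℝ (Fin n) → EuclideanSpace ℝ (Fin n))
    (hs : ∀ x ∈ {x : EuclideanSpace ℝ (Fin n) | ∀ i, x i ∈ Set.Icc (0:ℝ) 1},
      ∀ u ∈ {x : EuclideanSpace ℝ (Fin n) | ∀ i, x i ∈ Set.Icc (0:ℝ) 1},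
        φ x + ⟪s x, u - x⟫ ≤ φ u)
    (L : ℝ) (hL : 0 < L)
    (hsL : ∀ x ∈ {x : EuclideanSpace ℝ (Fin n) | ∀ i, x i ∈ Set.Icc (0:ℝ) 1},
      ∀ i, |s x i| ≤ L)
    (t : ℝ) (ht : 0 < t)
    (ε : ℝ) (hε : ε ∈ Set.Ioc (0:ℝ) (9 * n * (1 + 2 * t * L) ^ 2)) :
    ∃ S : Finset (EuclideanSpace ℝ (Fin n)),
      (↑S ⊆ {x : EuclideanSpace ℝ (Fin n) | ∀ i, x i ∈ Set.Icc (0:ℝ) 1}) ∧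
      (S.card : ℝ) ≤ (9 * n * (1 + 2 * t * L) ^ 2 / ε) ^ ((n : ℝ) / 2) ∧
      ∀ x ∈ {x : EuclideanSpace ℝ (Fin n) | ∀ i, x i ∈ Set.Icc (0:ℝ) 1},
        ∃ xh ∈ S, ‖x - xh‖ ^ 2 + t ^ 2 * ‖s x - s xh‖ ^ 2 ≤ ε ∧
          ‖x - xh‖ ≤ Real.sqrt ε ∧ ‖s x - s xh‖ ≤ Real.sqrt ε / t :=
  subgradient_net_exists_general n φ s hs L hL hsL t ht ε hε
end

section
/- Let n ≥ 1, L > 0, and let f : [0,1]^{n} → ℝ be of the form f = φ₁ − φ₂, where for i = 1, 2 the function φ_i is convex on [0,1]^{n} and admits a subgradient selection s_i on [0,1]^{n} with ‖s_i(x)‖_∞ ≤ L for all x ∈ [0,1]^{n}. Then for every ε > 0 there exist max-affine functions h₁ and h₂, each with at most K = ⌈(144 n L / ε)^{n/2}⌉ pieces, such that sup_{x ∈ [0,1]^{n}} |f(x) − (h₁(x) − h₂(x))| ≤ ε; moreover h_i can be taken of the form h_i(x) = max_{1≤j≤K} ( φ_i(x̂_j^{(i)}) + ⟨s_i(x̂_j^{(i)}),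 x − x̂_j^{(i)}⟩ ) for points x̂_j^{(i)} ∈ [0,1]^{n}, so that h_i ≤ φ_i pointwise on [0,1]^{n}. -/
open scoped RealInnerProductSpace

/-!
For a function `φ` with a subgradient selection `s` on a set, the gap between `φ x` and the
supporting hyperplane at `y` is at most `⟪x - y, s x - s y⟫ ≤ L / 2 * ‖G x - G y‖ ^ 2`, where
`G = id + L⁻¹ • s`. On the unit cube, `‖s‖_∞ ≤ L` puts `G` into `[-1, 2]ⁿ`; cutting that box into
`mⁿ` subcubes of side `3 / m` and taking one point of the unit cube per occupied subcube, the
supporting hyperplanes at these points form a max-affine minorant of `φ` within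
`9 n L / (2 m²)` of it. With `m = ⌈√(144 n L / ε) / 2⌉` this is at most `ε / 2` and
`mⁿ ≤ ⌈(144 n L / ε)^(n/2)⌉`.
-/

section SupportingHyperplane

variable {E : Type*} [NormedAddCommGroup E] [InnerProductSpace ℝ E]
  {S : Set E} {φ : E → ℝ} {s : E → E}

theorem real_inner_le_half_mul_norm_add_inv_smul_sq {L : ℝ} (hL : 0 < L) (a b : E) :
    ⟪a, b⟫ ≤ L / 2 * ‖a + L⁻¹ • b‖ ^ 2 := by
  rw [norm_add_sq_real, norm_smul, real_inner_smul_right, Real.norm_of_nonneg (by positivity)]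
  field_simp
  nlinarith [sq_nonneg (L * ‖a‖), sq_nonneg ‖b‖]

theorem sub_supporting_le_inner (hs : ∀ x ∈ S, ∀ u ∈ S, φ x + ⟪s x, u - x⟫ ≤ φ u)
    {x y : E} (hx : x ∈ S) (hy : y ∈ S) :
    φ x - (φ y + ⟪s y, x - y⟫) ≤ ⟪x - y, s x - s y⟫ := by
  have hxy := hs x hx y hy
  rw [← neg_sub x y, inner_neg_right] at hxy
  rw [inner_sub_right (x - y), real_inner_comm (s x), real_inner_comm (s y)]
  linarith

theorem sub_supporting_le_norm_sq (hs : ∀ x ∈ S, ∀ u ∈ S, φ x + ⟪s x, u - x⟫ ≤ φ u)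
    {L : ℝ} (hL : 0 < L) {x y : E} (hx : x ∈ S) (hy : y ∈ S) :
    φ x - (φ y + ⟪s y, x - y⟫) ≤ L / 2 * ‖(x + L⁻¹ • s x) - (y + L⁻¹ • s y)‖ ^ 2 := by
  rw [add_sub_add_comm, ← smul_sub]
  exact (sub_supporting_le_inner hs hx hy).trans
    (real_inner_le_half_mul_norm_add_inv_smul_sq hL _ _)

theorem iSup_supporting_mem_Icc {ι : Sort*} [Finite ι]
    (hs : ∀ x ∈ S, ∀ u ∈ S, φ x + ⟪s x, u - x⟫ ≤ φ u) {y : ι → E} (hy : ∀ k, y k ∈ S)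
    {x : E} (hx : x ∈ S) {δ : ℝ} (k : ι) (hk : φ x - (φ (y k) + ⟪s (y k), x - y k⟫) ≤ δ) :
    ⨆ k, (φ (y k) + ⟪s (y k), x - y k⟫) ∈ Set.Icc (φ x - δ) (φ x) := by
  have : Nonempty ι := ⟨k⟩
  have := le_ciSup (Set.finite_range fun k => φ (y k) + ⟪s (y k), x - y k⟫).bddAbove k
  exact ⟨by linarith, ciSup_le fun k => hs _ (hy k) x hx⟩

end SupportingHyperplane

theorem exists_fin_net_of_card_le {X ι : Type*} [Fintype ι] {S : Set X} (hS : S.Nonempty)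
    (q : X → ι) {K : ℕ} (hK : Fintype.card ι ≤ K) :
    ∃ y : Fin K → X, (∀ k, y k ∈ S) ∧ ∀ x ∈ S, ∃ k, q (y k) = q x := by
  classical
  let e : ι ↪ Fin K := (Fintype.equivFin ι).toEmbedding.trans (Fin.castLEEmb hK)
  let y : Fin K → X := fun k => if h : ∃ x ∈ S, e (q x) = k then h.choose else hS.some
  refine ⟨y, fun k => ?_, fun x hx => ⟨e (q x), ?_⟩⟩
  · by_cases h : ∃ x ∈ S, e (q x) = k
    · simpa only [y, dif_pos h] using h.choose_spec.1
    · simpa only [y, dif_neg h] using hS.some_mem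
  · have h : ∃ x' ∈ S, e (q x') = e (q x) := ⟨x, hx, rfl⟩
    simpa only [y, dif_pos h] using e.injective h.choose_spec.2

noncomputable def gridCell (m : ℕ) [NeZero m] (t : ℝ) : Fin m :=
  ⟨min (m - 1) ⌊t⌋₊, (min_le_left _ _).trans_lt (Nat.sub_one_lt (NeZero.ne m))⟩

section gridCell

variable {m : ℕ} [NeZero m] {t t' : ℝ}

theorem gridCell_le (ht : 0 ≤ t) : (gridCell m t : ℝ) ≤ t :=
  (Nat.cast_le.2 (min_le_right _ _)).trans (Nat.floor_le ht)

theorem le_gridCell_add_one (ht : t ≤ m) : t ≤ gridCell m t + 1 := by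
  rcases le_total ⌊t⌋₊ (m - 1) with h | h
  · simpa [gridCell, min_eq_right h] using (Nat.lt_floor_add_one t).le
  · simpa [gridCell, min_eq_left h, Nat.cast_sub (NeZero.one_le : 1 ≤ m)] using ht

theorem abs_sub_le_one_of_gridCell_eq (ht : t ∈ Set.Icc 0 (m : ℝ))
    (ht' : t' ∈ Set.Icc 0 (m : ℝ)) (h : gridCell m t = gridCell m t') : |t - t'| ≤ 1 := by
  have h₁ := gridCell_le (m := m) ht.1
  have h₂ := le_gridCell_add_one (m := m) ht.2
  have h₁' := gridCell_le (m := m) ht'.1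
  have h₂' := le_gridCell_add_one (m := m) ht'.2
  rw [h] at h₁ h₂
  rw [abs_le]
  constructor <;> linarith

end gridCell

theorem exists_fin_net_coord_close {X ι : Type*} [Fintype ι] {S : Set X} (hS : S.Nonempty)
    (g : X → ι → ℝ) {a b : ℝ} (hab : a < b) (hg : ∀ x ∈ S, ∀ j, g x j ∈ Set.Icc a b)
    (m : ℕ) [NeZero m] {K : ℕ} (hK : m ^ Fintype.card ι ≤ K) :
    ∃ y : Fin K → X, (∀ k, y k ∈ S) ∧ ∀ x ∈ S, ∃ k, ∀ j, |g x j - g (y k) j| ≤ (b - a) / m := by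
  classical
  have hw : 0 < b - a := sub_pos.2 hab
  set rescale : ℝ → ℝ := fun t => (t - a) * m / (b - a)
  have hrescale : ∀ x ∈ S, ∀ j, rescale (g x j) ∈ Set.Icc 0 (m : ℝ) := by
    intro x hx j
    obtain ⟨h₁, h₂⟩ := hg x hx j
    constructor
    · have : 0 ≤ g x j - a := by linarith
      positivity
    · rw [div_le_iff₀ hw]
      nlinarith [(Nat.cast_nonneg m : (0 : ℝ) ≤ m)]
  obtain ⟨y, hyS, hy⟩ := exists_fin_net_of_card_le hS
    (fun x j => gridCell m (rescale (g x j))) (by simpa using hK)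
  refine ⟨y, hyS, fun x hx => (hy x hx).imp fun k hk j => ?_⟩
  have hcell := abs_sub_le_one_of_gridCell_eq (hrescale x hx j) (hrescale (y k) (hyS k) j)
    (congrFun hk j).symm
  have hm : (0 : ℝ) < m := Nat.cast_pos.2 (Nat.pos_of_neZero m)
  have hdiff : g x j - g (y k) j = (rescale (g x j) - rescale (g (y k) j)) * ((b - a) / m) := by
    simp only [rescale]; field_simp; ring
  rw [hdiff, abs_mul, abs_of_pos (by positivity : 0 < (b - a) / m)]
  exact mul_le_of_le_one_left (by positivity) hcell

theorem EuclideanSpace.norm_sq_le_card_mul_sq {ι : Type*} [Fintype ι] {v : EuclideanSpace ℝ ι}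
    {r : ℝ} (hv : ∀ j, |v j| ≤ r) : ‖v‖ ^ 2 ≤ Fintype.card ι * r ^ 2 := by
  rw [EuclideanSpace.norm_sq_eq]
  calc ∑ j, ‖v j‖ ^ 2 ≤ ∑ _j : ι, r ^ 2 :=
        Finset.sum_le_sum fun j _ =>
          pow_le_pow_left₀ (norm_nonneg _) ((Real.norm_eq_abs _).trans_le (hv j)) 2
    _ = Fintype.card ι * r ^ 2 := by simp

theorem exists_supporting_net {ι : Type*} [Fintype ι] {S : Set (EuclideanSpace ℝ ι)}
    (hS : S.Nonempty) {φ : EuclideanSpace ℝ ι → ℝ} {s : EuclideanSpace ℝ ι → EuclideanSpace ℝ ι}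
    (hs : ∀ x ∈ S, ∀ u ∈ S, φ x + ⟪s x, u - x⟫ ≤ φ u) {L : ℝ} (hL : 0 < L) {a b : ℝ}
    (hab : a < b) (hG : ∀ x ∈ S, ∀ j, x j + L⁻¹ * s x j ∈ Set.Icc a b)
    (m : ℕ) [NeZero m] {K : ℕ} (hK : m ^ Fintype.card ι ≤ K) :
    ∃ y : Fin K → EuclideanSpace ℝ ι, (∀ k, y k ∈ S) ∧ ∀ x ∈ S, ∃ k,
      φ x - (φ (y k) + ⟪s (y k), x - y k⟫) ≤ L / 2 * Fintype.card ι * ((b - a) / m) ^ 2 := by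
  obtain ⟨y, hyS, hy⟩ := exists_fin_net_coord_close hS (fun x j => x j + L⁻¹ * s x j) hab hG m hK
  refine ⟨y, hyS, fun x hx => (hy x hx).imp fun k hk => ?_⟩
  have hnorm := EuclideanSpace.norm_sq_le_card_mul_sq
    (v := (x + L⁻¹ • s x) - (y k + L⁻¹ • s (y k))) (r := (b - a) / m) (by simpa using hk)
  calc φ x - (φ (y k) + ⟪s (y k), x - y k⟫)
      ≤ L / 2 * ‖(x + L⁻¹ • s x) - (y k + L⁻¹ • s (y k))‖ ^ 2 :=
        sub_supporting_le_norm_sq hs hL hx (hyS k)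
    _ ≤ L / 2 * Fintype.card ι * ((b - a) / m) ^ 2 := by
        rw [mul_assoc]; gcongr

theorem Nat.ceil_pow_le_ceil_two_mul_pow {a : ℝ} (ha : 0 < a) (n : ℕ) :
    ⌈a⌉₊ ^ n ≤ ⌈(2 * a) ^ n⌉₊ := by
  rcases le_or_gt a 2⁻¹ with h | h
  · calc ⌈a⌉₊ ^ n ≤ 1 ^ n := Nat.pow_le_pow_left (Nat.ceil_le.2 (by norm_num; linarith)) n
      _ ≤ ⌈(2 * a) ^ n⌉₊ := by rw [one_pow, Nat.one_le_ceil_iff]; positivity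
  · have := pow_le_pow_left₀ (by positivity) (Nat.ceil_lt_two_mul h).le n
    exact_mod_cast this.trans (Nat.le_ceil _)


theorem exists_grid_resolution {n : ℕ} (hn : 1 ≤ n) {L ε : ℝ} (hL : 0 < L) (hε : 0 < ε) :
    ∃ m : ℕ, 0 < m ∧ m ^ n ≤ ⌈(144 * n * L / ε) ^ ((n : ℝ) / 2)⌉₊ ∧
      L / 2 * n * (3 / m) ^ 2 ≤ ε / 2 := by
  set A := 144 * n * L / ε
  have hA : 0 < A := by
    have : (0 : ℝ) < n := by exact_mod_cast hn
    positivity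
  refine ⟨⌈√A / 2⌉₊, Nat.ceil_pos.2 (by positivity), ?_, ?_⟩
  · simpa [mul_div_cancel₀, Real.rpow_div_two_eq_sqrt _ hA.le] using
      Nat.ceil_pow_le_ceil_two_mul_pow (a := √A / 2) (by positivity) n
  · set m := ⌈√A / 2⌉₊
    have hAm : A ≤ (2 * m) ^ 2 :=
      (Real.sqrt_le_left (by positivity)).1 (by linarith [Nat.le_ceil (√A / 2)])
    have : 144 * n * L ≤ (2 * m) ^ 2 * ε := (div_le_iff₀ hε).1 hAm
    have hm : (0 : ℝ) < m := Nat.cast_pos.2 (Nat.ceil_pos.2 (by positivity))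
    rw [show L / 2 * n * (3 / m) ^ 2 = 9 * n * L / (2 * m ^ 2) by field_simp; ring,
      div_le_div_iff₀ (by positivity) two_pos]
    nlinarith

theorem add_inv_mul_mem_Icc {t u L : ℝ} (ht : t ∈ Set.Icc (0 : ℝ) 1) (hu : |u| ≤ L)
    (hL : 0 < L) : t + L⁻¹ * u ∈ Set.Icc (-1 : ℝ) 2 := by
  have : |L⁻¹ * u| ≤ 1 := by
    rwa [abs_mul, abs_inv, abs_of_pos hL, inv_mul_le_iff₀ hL, mul_one]
  obtain ⟨ht₀, ht₁⟩ := ht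
  constructor <;> linarith [abs_le.1 this]

theorem dc_approx_by_maxAffine_general (n : ℕ) (hn : 1 ≤ n) (L : ℝ) (hL : 0 < L)
    (f : EuclideanSpace ℝ (Fin n) → ℝ)
    (φ : Fin 2 → EuclideanSpace ℝ (Fin n) → ℝ)
    (s : Fin 2 → EuclideanSpace ℝ (Fin n) → EuclideanSpace ℝ (Fin n))
    (hf : ∀ x ∈ {x : EuclideanSpace ℝ (Fin n) | ∀ j, x j ∈ Set.Icc (0:ℝ) 1},
      f x = φ 0 x - φ 1 x)
    (hs : ∀ i, ∀ x ∈ {x : EuclideanSpace ℝ (Fin n) | ∀ j, x j ∈ Set.Icc (0:ℝ) 1},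
      ∀ u ∈ {x : EuclideanSpace ℝ (Fin n) | ∀ j, x j ∈ Set.Icc (0:ℝ) 1},
        φ i x + ⟪s i x, u - x⟫ ≤ φ i u)
    (hsL : ∀ i, ∀ x ∈ {x : EuclideanSpace ℝ (Fin n) | ∀ j, x j ∈ Set.Icc (0:ℝ) 1},
      ∀ j, |s i x j| ≤ L)
    (ε : ℝ) (hε : 0 < ε) :
    ∃ xh : Fin 2 → Fin ⌈(144 * n * L / ε) ^ ((n : ℝ) / 2)⌉₊ → EuclideanSpace ℝ (Fin n),
      (∀ i j, xh i j ∈ {x : EuclideanSpace ℝ (Fin n) | ∀ l, x l ∈ Set.Icc (0:ℝ) 1}) ∧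
      (∀ x ∈ {x : EuclideanSpace ℝ (Fin n) | ∀ l, x l ∈ Set.Icc (0:ℝ) 1},
        |f x - ((⨆ j, (φ 0 (xh 0 j) + ⟪s 0 (xh 0 j), x - xh 0 j⟫)) -
                (⨆ j, (φ 1 (xh 1 j) + ⟪s 1 (xh 1 j), x - xh 1 j⟫)))| ≤ ε) ∧
      (∀ i, ∀ x ∈ {x : EuclideanSpace ℝ (Fin n) | ∀ l, x l ∈ Set.Icc (0:ℝ) 1},
        (⨆ j, (φ i (xh i j) + ⟪s i (xh i j), x - xh i j⟫)) ≤ φ i x) := by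
  set C := {x : EuclideanSpace ℝ (Fin n) | ∀ j, x j ∈ Set.Icc (0:ℝ) 1}
  obtain ⟨m, hm, hmK, herr⟩ := exists_grid_resolution hn hL hε
  have : NeZero m := ⟨hm.ne'⟩
  have hnet : ∀ i, ∃ y : Fin ⌈(144 * n * L / ε) ^ ((n : ℝ) / 2)⌉₊ → EuclideanSpace ℝ (Fin n),
      (∀ k, y k ∈ C) ∧ ∀ x ∈ C, ∃ k, φ i x - (φ i (y k) + ⟪s i (y k), x - y k⟫) ≤ ε / 2 :=
    fun i => by
      obtain ⟨y, hyC, hy⟩ := exists_supporting_net ⟨0, fun j => by simp⟩ (hs i) hL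
        (by norm_num : (-1 : ℝ) < 2) (fun x hx j => add_inv_mul_mem_Icc (hx j) (hsL i x hx j) hL)
        m (by simpa using hmK)
      exact ⟨y, hyC, fun x hx => (hy x hx).imp fun k hk => hk.trans (by norm_num; exact herr)⟩
  choose xh hxhC hxh using hnet
  have hIcc : ∀ i, ∀ x ∈ C, (⨆ k, (φ i (xh i k) + ⟪s i (xh i k), x - xh i k⟫)) ∈
      Set.Icc (φ i x - ε / 2) (φ i x) := fun i x hx =>
    (hxh i x hx).elim fun k hk => iSup_supporting_mem_Icc (hs i) (hxhC i) hx k hk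
  refine ⟨xh, hxhC, fun x hx => ?_, fun i x hx => (hIcc i x hx).2⟩
  obtain ⟨h₀, h₀'⟩ := hIcc 0 x hx
  obtain ⟨h₁, h₁'⟩ := hIcc 1 x hx
  rw [hf x hx, abs_le]
  constructor <;> linarith

/-- a difference of convex functions with bounded subgradient selections on the
unit cube is uniformly `ε`-approximated by a difference of two max-affine functions, each with
at most `K = ⌈(144 n L / ε)^{n/2}⌉` pieces, built from supporting hyperplanes (so that each
max-affine function lower bounds the corresponding convex function). -/
theorem dc_approx_by_maxAffine (n : ℕ) (hn : 1 ≤ n) (L : ℝ) (hL : 0 < L)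
    (f : EuclideanSpace ℝ (Fin n) → ℝ)
    (φ : Fin 2 → EuclideanSpace ℝ (Fin n) → ℝ)
    (s : Fin 2 → EuclideanSpace ℝ (Fin n) → EuclideanSpace ℝ (Fin n))
    (hφ : ∀ i, ConvexOn ℝ {x : EuclideanSpace ℝ (Fin n) | ∀ j, x j ∈ Set.Icc (0:ℝ) 1} (φ i))
    (hf : ∀ x ∈ {x : EuclideanSpace ℝ (Fin n) | ∀ j, x j ∈ Set.Icc (0:ℝ) 1},
      f x = φ 0 x - φ 1 x)
    (hs : ∀ i, ∀ x ∈ {x : EuclideanSpace ℝ (Fin n) | ∀ j, x j ∈ Set.Icc (0:ℝ) 1},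
      ∀ u ∈ {x : EuclideanSpace ℝ (Fin n) | ∀ j, x j ∈ Set.Icc (0:ℝ) 1},
        φ i x + ⟪s i x, u - x⟫ ≤ φ i u)
    (hsL : ∀ i, ∀ x ∈ {x : EuclideanSpace ℝ (Fin n) | ∀ j, x j ∈ Set.Icc (0:ℝ) 1},
      ∀ j, |s i x j| ≤ L)
    (ε : ℝ) (hε : 0 < ε) :
    ∃ xh : Fin 2 → Fin ⌈(144 * n * L / ε) ^ ((n : ℝ) / 2)⌉₊ → EuclideanSpace ℝ (Fin n),
      (∀ i j, xh i j ∈ {x : EuclideanSpace ℝ (Fin n) | ∀ l, x l ∈ Set.Icc (0:ℝ) 1}) ∧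
      (∀ x ∈ {x : EuclideanSpace ℝ (Fin n) | ∀ l, x l ∈ Set.Icc (0:ℝ) 1},
        |f x - ((⨆ j, (φ 0 (xh 0 j) + ⟪s 0 (xh 0 j), x - xh 0 j⟫)) -
                (⨆ j, (φ 1 (xh 1 j) + ⟪s 1 (xh 1 j), x - xh 1 j⟫)))| ≤ ε) ∧
      (∀ i, ∀ x ∈ {x : EuclideanSpace ℝ (Fin n) | ∀ l, x l ∈ Set.Icc (0:ℝ) 1},
        (⨆ j, (φ i (xh i j) + ⟪s i (xh i j), x - xh i j⟫)) ≤ φ i x) :=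
  dc_approx_by_maxAffine_general n hn L hL f φ s hf hs hsL ε hε
end

section
/- For every x ∈ ℝ, the set {z ∈ [0,1] : (x − 1)·z ≤ 0 and (x + 1)·z ≥ 0} has a greatest element, and this greatest element equals ψ(x), where ψ(x) = 1 if |x| ≤ 1 and ψ(x) = 0 otherwise. In other words, the solution of the linear program min_{z ∈ [0,1]} (−z) subject to (x−1)z ≤ 0 and (x+1)z ≥ 0, viewed as a function of the parameter x, is exactly the bump (indicator) function of the interval [−1, 1]. -/
/-- the parametric LP `min −z` over `{z ∈ [0,1] : (x−1)z ≤ 0, (x+1)z ≥ 0}`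
has as its solution (the greatest element of the feasible set) exactly the bump function
of the interval `[−1,1]`. -/
theorem bump_is_LP_solution (x : ℝ) :
    IsGreatest {z : ℝ | z ∈ Set.Icc (0:ℝ) 1 ∧ (x - 1) * z ≤ 0 ∧ (x + 1) * z ≥ 0}
      (if |x| ≤ 1 then 1 else 0) := by
  simp only [abs_le]
  by_cases h : -1 ≤ x ∧ x ≤ 1
  · simp only [if_pos h]
    constructor
    · refine ⟨⟨zero_le_one, le_refl 1⟩, ?_, ?_⟩ <;> nlinarith [h.1, h.2]
    · intro z hz; exact hz.1.2
  · simp only [if_neg h]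
    push_neg at h
    constructor
    · refine ⟨⟨le_refl 0, zero_le_one⟩, by ring_nf; simp, by ring_nf; simp⟩
    · intro z hz
      obtain ⟨⟨hz0, hz1⟩, hle, hge⟩ := hz
      rcases lt_or_ge x (-1) with hx | hx
      · nlinarith
      · have := h hx; nlinarith
end

section
/- Let A₀ be an invertible n×n real matrix, let A_I be a p×n real matrix (p ≤ n) such that A_I A₀^{-1} A_I^⊤ is invertible, and let b̃₀ ∈ ℝ^{n}, b̃₁ ∈ ℝ^{p}. If z ∈ ℝ^{n} and λ ∈ ℝ^{p} satisfy the stationarity and active-constraint equations A₀ z + b̃₀ + A_I^⊤ λ = 0 and A_I z = b̃₁, then λ = −(A_I A₀^{-1} A_I^⊤)^{-1} (A_I A₀^{-1} b̃₀ + b̃₁) and z = A₀^{-1} A_I^⊤ (A_I A₀^{-1} A_I^⊤)^{-1} (A_I A₀^{-1} b̃₀ + b̃₁) − A₀^{-1} b̃₀. In particular, when b̃₀ and b̃₁ are affine functions of a parameter x, the KKT solution z of a quadratic program with fixed active set is an affine function of x. -/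
open Matrix
/-- explicit multi-parametric QP solution formula. If `(z, λ)` satisfies the
stationarity and active-constraint equations, then `λ` and `z` are given by the stated closed
forms (in particular `z` is affine in the parameter when `b̃₀, b̃₁` are affine in it). -/
theorem mpQP_fixed_active_set_formula (n p : ℕ) (hp : p ≤ n)
    (A₀ : Matrix (Fin n) (Fin n) ℝ) (hA₀ : IsUnit A₀)
    (AI : Matrix (Fin p) (Fin n) ℝ)
    (hAI : IsUnit (AI * A₀⁻¹ * AIᵀ))
    (b₀ : Fin n → ℝ) (b₁ : Fin p → ℝ)
    (z : Fin n → ℝ) (l : Fin p → ℝ)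
    (hstat : A₀.mulVec z + b₀ + AIᵀ.mulVec l = 0)
    (hact : AI.mulVec z = b₁) :
    l = -((AI * A₀⁻¹ * AIᵀ)⁻¹.mulVec (AI.mulVec (A₀⁻¹.mulVec b₀) + b₁)) ∧
    z = A₀⁻¹.mulVec (AIᵀ.mulVec ((AI * A₀⁻¹ * AIᵀ)⁻¹.mulVec
          (AI.mulVec (A₀⁻¹.mulVec b₀) + b₁))) - A₀⁻¹.mulVec b₀ := by
  set M := AI * A₀⁻¹ * AIᵀ with hM
  have hdA : IsUnit A₀.det := (isUnit_iff_isUnit_det A₀).mp hA₀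
  have hdM : IsUnit M.det := (isUnit_iff_isUnit_det M).mp hAI
  -- z in terms of l
  have hz : z = -(A₀⁻¹.mulVec (b₀ + AIᵀ.mulVec l)) := by
    have h1 : A₀.mulVec z = -(b₀ + AIᵀ.mulVec l) := by
      linear_combination (norm := abel) hstat
    have h2 := congrArg (A₀⁻¹.mulVec ·) h1
    simp only [Matrix.mulVec_mulVec, Matrix.nonsing_inv_mul A₀ hdA, Matrix.one_mulVec,
      Matrix.mulVec_neg, Matrix.mulVec_add] at h2 ⊢
    linear_combination (norm := abel) h2
  -- plug into hact
  have hl : M.mulVec l = -(AI.mulVec (A₀⁻¹.mulVec b₀) + b₁) := by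
    have h2 : AI.mulVec (-(A₀⁻¹.mulVec (b₀ + AIᵀ.mulVec l))) = b₁ := by
      rw [← hz]; exact hact
    simp only [Matrix.mulVec_neg, Matrix.mulVec_add, Matrix.mulVec_mulVec, hM,
      Matrix.mul_assoc] at h2 ⊢
    linear_combination (norm := abel) -h2
  have hlval : l = -(M⁻¹.mulVec (AI.mulVec (A₀⁻¹.mulVec b₀) + b₁)) := by
    have h3 := congrArg (M⁻¹.mulVec ·) hl
    simp only [Matrix.mulVec_mulVec, Matrix.nonsing_inv_mul M hdM, Matrix.one_mulVec,
      Matrix.mulVec_neg, Matrix.mulVec_add] at h3 ⊢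
    linear_combination (norm := abel) h3
  refine ⟨hlval, ?_⟩
  rw [hz, hlval]
  simp only [Matrix.mulVec_neg, Matrix.mulVec_add, sub_eq_add_neg]
  abel
end

section
/- Let k ≥ 1, let X ⊂ ℝ^{n_x} be a bounded, closed, convex set, and let f, g : ℝ^{n_x} → ℝ both have partial derivatives up to order k bounded by 1 on X. Let δ ∈ (0,1) and let x, x̂ ∈ X with ‖x − x̂‖ ≤ δ (Euclidean norm). If |D^𝐧 f(x̂) − D^𝐧 g(x̂)| ≤ δ^{k − |𝐧|} for every multi-index 𝐧 with |𝐧| ≤ k, then |f(x) − g(x)| ≤ ( e^{n_x} + 2 n_x^{k} / k! ) · δ^{k}. -/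
/-!
Restrict `f` and `g` to the segment from `x̂` to `x` and expand both by Taylor's formula of order
`k - 1` with Lagrange remainder. With `u = x - x̂`, the `d`-th coefficient is
`D^d f(x̂)(u, …, u)`, and expanding `u` in coordinates bounds a `d`-linear form at `(u, …, u)` by
`(∑ |uᵢ|)^d ≤ (n_x δ)^d` times its bound on basis vectors. The coefficient differences then
contribute `∑_d n_x^d δ^k / d! ≤ e^{n_x} δ^k`, and each remainder at most `n_x^k δ^k / k!`.
-/

open Set Nat

theorem MultilinearMap.abs_apply_const_le {ι : Type*} [Fintype ι] [DecidableEq ι] {d : ℕ}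
    (M : MultilinearMap ℝ (fun _ : Fin d => ι → ℝ) ℝ) (u : ι → ℝ) {C : ℝ}
    (hM : ∀ v : Fin d → ι, |M (fun j => Pi.single (v j) 1)| ≤ C) :
    |M (fun _ => u)| ≤ (∑ i, |u i|) ^ d * C := by
  have hu : u = ∑ i, u i • Pi.single i 1 := by ext; simp [Pi.single_apply]
  calc |M (fun _ => u)|
      = |∑ v : Fin d → ι, (∏ j, u (v j)) * M (fun j => Pi.single (v j) 1)| := by
        conv_lhs => rw [hu, M.map_sum]
        simp only [M.map_smul_univ, smul_eq_mul]
    _ ≤ ∑ v : Fin d → ι, (∏ j, |u (v j)|) * C := by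
        refine (Finset.abs_sum_le_sum_abs _ _).trans (Finset.sum_le_sum fun v _ => ?_)
        rw [abs_mul, Finset.abs_prod]
        exact mul_le_mul_of_nonneg_left (hM v) (Finset.prod_nonneg fun _ _ => abs_nonneg _)
    _ = (∑ i, |u i|) ^ d * C := by
        rw [← Finset.sum_mul, ← Fin.prod_const, Finset.prod_univ_sum, Fintype.piFinset_univ]

section

variable {E G : Type*} [NormedAddCommGroup E] [NormedSpace ℝ E]
  [NormedAddCommGroup G] [NormedSpace ℝ G]

theorem ContDiffOn.comp_add_smul {n : WithTop ℕ∞} {F : E → G} {U : Set E}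
    (hF : ContDiffOn ℝ n F U) (a u : E) :
    ContDiffOn ℝ n (fun t : ℝ => F (a + t • u)) {t | a + t • u ∈ U} :=
  hF.comp (by fun_prop) fun _ ht => ht

theorem iteratedDeriv_comp_add_smul {n : WithTop ℕ∞} {F : E → G} {U : Set E} (hU : IsOpen U)
    (hF : ContDiffOn ℝ n F U) {a u : E} {t : ℝ} (ht : a + t • u ∈ U) {d : ℕ} (hd : d ≤ n) :
    iteratedDeriv d (fun s : ℝ => F (a + s • u)) t =
      iteratedFDeriv ℝ d F (a + t • u) (fun _ => u) := by
  set L := ContinuousLinearMap.toSpanSingleton ℝ u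
  set V := (a + ·) ⁻¹' U
  have hV : IsOpen V := hU.preimage (by fun_prop)
  have hLV : IsOpen (L ⁻¹' V) := hV.preimage L.continuous
  have hFa : ContDiffOn ℝ n (fun y => F (a + y)) V := hF.comp (by fun_prop) fun _ hy => hy
  have hφ : (fun s : ℝ => F (a + s • u)) = (fun y => F (a + y)) ∘ L := rfl
  rw [iteratedDeriv_eq_iteratedFDeriv, hφ, ← iteratedFDerivWithin_of_isOpen d hLV ht,
    L.iteratedFDerivWithin_comp_right hFa hV.uniqueDiffOn hLV.uniqueDiffOn ht hd,
    iteratedFDerivWithin_of_isOpen d hV (show L t ∈ V from ht), iteratedFDeriv_comp_add_left]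
  simp [L]

theorem taylor_mean_remainder_lagrange_segment {F : E → ℝ} {U : Set E} (hU : IsOpen U) {n : ℕ}
    (hF : ContDiffOn ℝ (n + 1) F U) {a b : E} (hab : segment ℝ a b ⊆ U) :
    ∃ ξ ∈ segment ℝ a b,
      F b - ∑ d ∈ Finset.range (n + 1), iteratedFDeriv ℝ d F a (fun _ => b - a) / d ! =
        iteratedFDeriv ℝ (n + 1) F ξ (fun _ => b - a) / (n + 1)! := by
  set T := {t : ℝ | a + t • (b - a) ∈ U}
  have hT : IsOpen T := hU.preimage (by fun_prop)
  have hIcc : Icc 0 1 ⊆ T := fun t ht => hab (segment_eq_image' ℝ a b ▸ mem_image_of_mem _ ht)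
  have hφ := hF.comp_add_smul a (b - a)
  have h01 : (0 : ℝ) ≤ 1 := zero_le_one
  obtain ⟨t, ht, hrem⟩ := taylor_mean_remainder_lagrange_iteratedDeriv zero_ne_one
    (hφ.mono (by rwa [uIcc_of_le h01]))
  rw [uIoo_of_le h01] at ht
  rw [uIcc_of_le h01, taylor_within_apply] at hrem
  refine ⟨a + t • (b - a),
    segment_eq_image' ℝ a b ▸ mem_image_of_mem _ (Ioo_subset_Icc_self ht), ?_⟩
  have hcoeff : ∀ d ∈ Finset.range (n + 1),
      iteratedDerivWithin d (fun t => F (a + t • (b - a))) (Icc (0 : ℝ) 1) 0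
        = iteratedFDeriv ℝ d F a (fun _ => b - a) := by
    intro d hd
    have hd : (d : WithTop ℕ∞) ≤ n + 1 := by
      exact_mod_cast (Finset.mem_range.1 hd).le
    have h0 : (0 : ℝ) ∈ T := hIcc (left_mem_Icc.2 h01)
    rw [iteratedDerivWithin_eq_iteratedDeriv (uniqueDiffOn_Icc zero_lt_one)
      ((hφ.contDiffAt (hT.mem_nhds h0)).of_le hd)
      (left_mem_Icc.2 h01), iteratedDeriv_comp_add_smul hU hF h0 hd]
    simp
  rw [Finset.sum_congr rfl fun d hd => by rw [hcoeff d hd],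
    iteratedDeriv_comp_add_smul hU hF (hIcc (Ioo_subset_Icc_self ht)) le_rfl] at hrem
  simpa [div_eq_inv_mul] using hrem

theorem abs_sub_le_of_taylor_segment {F G : E → ℝ} {U : Set E} (hU : IsOpen U) {n : ℕ}
    (hF : ContDiffOn ℝ (n + 1) F U) (hG : ContDiffOn ℝ (n + 1) G U) {a b : E}
    (hab : segment ℝ a b ⊆ U) {R : ℝ} {c : ℕ → ℝ}
    (hFR : ∀ ξ ∈ segment ℝ a b, |iteratedFDeriv ℝ (n + 1) F ξ (fun _ => b - a)| ≤ R)
    (hGR : ∀ ξ ∈ segment ℝ a b, |iteratedFDeriv ℝ (n + 1) G ξ (fun _ => b - a)| ≤ R)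
    (hc : ∀ d ≤ n,
      |iteratedFDeriv ℝ d F a (fun _ => b - a) - iteratedFDeriv ℝ d G a (fun _ => b - a)| ≤ c d) :
    |F b - G b| ≤ 2 * R / (n + 1)! + ∑ d ∈ Finset.range (n + 1), c d / d ! := by
  obtain ⟨ξ, hξ, hTF⟩ := taylor_mean_remainder_lagrange_segment hU hF hab
  obtain ⟨η, hη, hTG⟩ := taylor_mean_remainder_lagrange_segment hU hG hab
  have hremainder : ∀ r, |r| ≤ R → |r / (n + 1)!| ≤ R / (n + 1)! := fun r hr => by
    rw [abs_div, Nat.abs_cast]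
    exact div_le_div_of_nonneg_right hr (by positivity)
  have hpoly : |(∑ d ∈ Finset.range (n + 1), iteratedFDeriv ℝ d F a (fun _ => b - a) / d !) -
      ∑ d ∈ Finset.range (n + 1), iteratedFDeriv ℝ d G a (fun _ => b - a) / d !| ≤
      ∑ d ∈ Finset.range (n + 1), c d / d ! := by
    rw [← Finset.sum_sub_distrib]
    refine (Finset.abs_sum_le_sum_abs _ _).trans (Finset.sum_le_sum fun d hd => ?_)
    rw [← sub_div, abs_div, Nat.abs_cast]
    exact div_le_div_of_nonneg_right (hc d (Nat.lt_succ_iff.1 (Finset.mem_range.1 hd)))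
      (by positivity)
  obtain ⟨hF₁, hF₂⟩ := abs_le.1 (hremainder _ (hFR ξ hξ))
  obtain ⟨hG₁, hG₂⟩ := abs_le.1 (hremainder _ (hGR η hη))
  obtain ⟨hP₁, hP₂⟩ := abs_le.1 hpoly
  rw [abs_le, two_mul, add_div]
  constructor <;> linarith

end

theorem sum_pow_mul_pow_sub_div_factorial_le {S c δ : ℝ} (hS : 0 ≤ S) (hc : 0 ≤ c)
    (hδ : 0 ≤ δ) (hSc : S ≤ c * δ) (k : ℕ) :
    ∑ d ∈ Finset.range k, S ^ d * δ ^ (k - d) / d ! ≤ Real.exp c * δ ^ k := by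
  calc ∑ d ∈ Finset.range k, S ^ d * δ ^ (k - d) / d !
      ≤ ∑ d ∈ Finset.range k, c ^ d / d ! * δ ^ k := Finset.sum_le_sum fun d hd => by
        calc S ^ d * δ ^ (k - d) / d ! ≤ (c * δ) ^ d * δ ^ (k - d) / d ! := by gcongr
          _ = c ^ d / d ! * δ ^ k := by
            rw [mul_pow, mul_assoc, ← pow_add, Nat.add_sub_cancel' (Finset.mem_range.1 hd).le]
            ring
    _ = (∑ d ∈ Finset.range k, c ^ d / d !) * δ ^ k := (Finset.sum_mul ..).symm
    _ ≤ Real.exp c * δ ^ k := by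
        gcongr
        exact Real.sum_le_exp_of_nonneg hc k

theorem sum_abs_le_card_mul_of_sqrt_sum_sq_le {ι : Type*} [Fintype ι] {v : ι → ℝ} {δ : ℝ}
    (h : √(∑ i, v i ^ 2) ≤ δ) : ∑ i, |v i| ≤ Fintype.card ι * δ := by
  have hv : ∀ i, |v i| ≤ δ := fun i =>
    (Real.abs_le_sqrt <|
      Finset.single_le_sum (fun j _ => sq_nonneg (v j)) (Finset.mem_univ i)).trans h
  simpa using Finset.sum_le_sum fun i (_ : i ∈ Finset.univ) => hv i

theorem taylor_comparison_general (nx k : ℕ) (hk : 1 ≤ k)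
    (X : Set (Fin nx → ℝ))
    (hXconv : Convex ℝ X)
    (f g : (Fin nx → ℝ) → ℝ)
    (hf : ∃ U, IsOpen U ∧ X ⊆ U ∧ ContDiffOn ℝ k f U)
    (hg : ∃ U, IsOpen U ∧ X ⊆ U ∧ ContDiffOn ℝ k g U)
    (hfb : ∀ y ∈ X, ∀ d ≤ k, ∀ v : Fin d → Fin nx,
      |iteratedFDeriv ℝ d f y (fun j => Pi.single (v j) 1)| ≤ 1)
    (hgb : ∀ y ∈ X, ∀ d ≤ k, ∀ v : Fin d → Fin nx,
      |iteratedFDeriv ℝ d g y (fun j => Pi.single (v j) 1)| ≤ 1)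
    (δ : ℝ)
    (x xh : Fin nx → ℝ) (hx : x ∈ X) (hxh : xh ∈ X)
    (hclose : Real.sqrt (∑ i, (x i - xh i) ^ 2) ≤ δ)
    (hagree : ∀ d ≤ k, ∀ v : Fin d → Fin nx,
      |iteratedFDeriv ℝ d f xh (fun j => Pi.single (v j) 1) -
        iteratedFDeriv ℝ d g xh (fun j => Pi.single (v j) 1)| ≤ δ ^ (k - d)) :
    |f x - g x| ≤ (Real.exp nx + 2 * (nx : ℝ) ^ k / k.factorial) * δ ^ k := by
  obtain ⟨n, rfl⟩ := Nat.exists_eq_add_of_le' hk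
  obtain ⟨Uf, hUf, hXUf, hfU⟩ := hf
  obtain ⟨Ug, hUg, hXUg, hgU⟩ := hg
  have hseg : segment ℝ xh x ⊆ X := hXconv.segment_subset hxh hx
  have hδ : 0 ≤ δ := (Real.sqrt_nonneg _).trans hclose
  set S := ∑ i, |x i - xh i|
  have hS : S ≤ nx * δ := by simpa using sum_abs_le_card_mul_of_sqrt_sum_sq_le hclose
  have hremainder : ∀ F : (Fin nx → ℝ) → ℝ,
      (∀ y ∈ X, ∀ d ≤ n + 1, ∀ v : Fin d → Fin nx,
        |iteratedFDeriv ℝ d F y (fun j => Pi.single (v j) 1)| ≤ 1) →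
      ∀ ξ ∈ segment ℝ xh x, |iteratedFDeriv ℝ (n + 1) F ξ (fun _ => x - xh)| ≤ S ^ (n + 1) :=
    fun F hFb ξ hξ => by
      simpa [S] using (iteratedFDeriv ℝ (n + 1) F ξ).toMultilinearMap.abs_apply_const_le
        (x - xh) (hFb ξ (hseg hξ) _ le_rfl)
  have hcoeff : ∀ d ≤ n, |iteratedFDeriv ℝ d f xh (fun _ => x - xh) -
      iteratedFDeriv ℝ d g xh (fun _ => x - xh)| ≤ S ^ d * δ ^ (n + 1 - d) := fun d hd => by
    simpa [S] using
      (iteratedFDeriv ℝ d f xh - iteratedFDeriv ℝ d g xh).toMultilinearMap.abs_apply_const_le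
        (x - xh) (fun v => by simpa using hagree d (by omega) v)
  calc |f x - g x|
      ≤ 2 * S ^ (n + 1) / (n + 1)! +
          ∑ d ∈ Finset.range (n + 1), S ^ d * δ ^ (n + 1 - d) / d ! :=
        abs_sub_le_of_taylor_segment (hUf.inter hUg) (hfU.mono inter_subset_left)
          (hgU.mono inter_subset_right) (hseg.trans (subset_inter hXUf hXUg))
          (hremainder f hfb) (hremainder g hgb) hcoeff
    _ ≤ 2 * (nx * δ) ^ (n + 1) / (n + 1)! + Real.exp nx * δ ^ (n + 1) := by
        gcongr
        exact sum_pow_mul_pow_sub_div_factorial_le (by positivity) (by positivity) hδ hS _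
    _ = (Real.exp nx + 2 * (nx : ℝ) ^ (n + 1) / (n + 1).factorial) * δ ^ (n + 1) := by ring

/-- Taylor-comparison step: two functions that are C^k near a bounded closed
convex set `X`, with partial derivatives up to order `k` bounded by 1 on `X`, whose derivative
data at a point `x̂` within Euclidean distance `δ` of `x` agree to resolution `δ^{k−|𝐧|}`,
differ at `x` by at most `(e^{n_x} + 2 n_x^k / k!) δ^k`. -/
theorem taylor_comparison (nx k : ℕ) (hk : 1 ≤ k)
    (X : Set (Fin nx → ℝ)) (hXb : Bornology.IsBounded X) (hXc : IsClosed X)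
    (hXconv : Convex ℝ X)
    (f g : (Fin nx → ℝ) → ℝ)
    (hf : ∃ U, IsOpen U ∧ X ⊆ U ∧ ContDiffOn ℝ k f U)
    (hg : ∃ U, IsOpen U ∧ X ⊆ U ∧ ContDiffOn ℝ k g U)
    (hfb : ∀ y ∈ X, ∀ d ≤ k, ∀ v : Fin d → Fin nx,
      |iteratedFDeriv ℝ d f y (fun j => Pi.single (v j) 1)| ≤ 1)
    (hgb : ∀ y ∈ X, ∀ d ≤ k, ∀ v : Fin d → Fin nx,
      |iteratedFDeriv ℝ d g y (fun j => Pi.single (v j) 1)| ≤ 1)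
    (δ : ℝ) (hδ : δ ∈ Set.Ioo (0 : ℝ) 1)
    (x xh : Fin nx → ℝ) (hx : x ∈ X) (hxh : xh ∈ X)
    (hclose : Real.sqrt (∑ i, (x i - xh i) ^ 2) ≤ δ)
    (hagree : ∀ d ≤ k, ∀ v : Fin d → Fin nx,
      |iteratedFDeriv ℝ d f xh (fun j => Pi.single (v j) 1) -
        iteratedFDeriv ℝ d g xh (fun j => Pi.single (v j) 1)| ≤ δ ^ (k - d)) :
    |f x - g x| ≤ (Real.exp nx + 2 * (nx : ℝ) ^ k / k.factorial) * δ ^ k :=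
  taylor_comparison_general nx k hk X hXconv f g hf hg hfb hgb δ x xh hx hxh hclose hagree
end
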